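/- arXiv:2603.13029 — 2 statements merged into one kernel-verified Lean document; each statement's English description precedes it below -/
import Mathlib

section
/- Strict positivity of the relative entropy up to second order: let θ ∈ ℝ and let f : ℝ² → ℝ (coordinates (V,φ)) be smooth and compactly supported with supp f ⊆ {(V,φ) : V > 0} and f not identically zero. Then 2π · ∫_{ℝ²} V·( (∂_V f)² + θ²·(∂_V ∂_φ f)² ) dV dφ > 0. -/
open MeasureTheory Real

noncomputable section

abbrev P2 := ℝ × ℝ

/-- Partial derivative in the first (V) coordinate. -/
def pdV (f : P2 → ℝ) (p : P2) : ℝ :=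
  deriv (fun v : ℝ => f (v, p.2)) p.1

/-- Partial derivative in the second (φ) coordinate. -/
def pdPhi (f : P2 → ℝ) (p : P2) : ℝ :=
  deriv (fun s : ℝ => f (p.1, s)) p.2

lemma pdV_eq_fderiv (f : P2 → ℝ) (hf : Differentiable ℝ f) (p : P2) :
    pdV f p = fderiv ℝ f p ((1 : ℝ), (0 : ℝ)) := by
  have h1 : HasDerivAt (fun v : ℝ => ((v, p.2) : P2)) ((1 : ℝ), (0 : ℝ)) p.1 :=
    (hasDerivAt_id p.1).prodMk (hasDerivAt_const _ _)
  have h2 := ((hf p).hasFDerivAt).comp_hasDerivAt p.1 h1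
  simpa [pdV, Function.comp_def] using h2.deriv

lemma pdPhi_eq_fderiv (f : P2 → ℝ) (hf : Differentiable ℝ f) (p : P2) :
    pdPhi f p = fderiv ℝ f p ((0 : ℝ), (1 : ℝ)) := by
  have h1 : HasDerivAt (fun s : ℝ => ((p.1, s) : P2)) ((0 : ℝ), (1 : ℝ)) p.2 :=
    (hasDerivAt_const _ _).prodMk (hasDerivAt_id p.2)
  have h2 := ((hf p).hasFDerivAt).comp_hasDerivAt p.2 h1
  simpa [pdPhi, Function.comp_def] using h2.deriv

lemma pdV_zero_of_nmem (f : P2 → ℝ) {p : P2} (hp : p ∉ tsupport f) : pdV f p = 0 := by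
  have hopen : IsOpen (tsupport f)ᶜ := (isClosed_tsupport f).isOpen_compl
  have hev : ∀ᶠ q in nhds p, f q = 0 := by
    filter_upwards [hopen.mem_nhds hp] with q hq using image_eq_zero_of_notMem_tsupport hq
  have hcont : Filter.Tendsto (fun v : ℝ => ((v, p.2) : P2)) (nhds p.1) (nhds p) := by
    have : Continuous fun v : ℝ => ((v, p.2) : P2) := by continuity
    exact this.continuousAt (x := p.1)
  have hev2 : (fun v : ℝ => f (v, p.2)) =ᶠ[nhds p.1] (fun _ => (0 : ℝ)) :=
    hcont.eventually hev
  rw [pdV, hev2.deriv_eq, deriv_const]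

lemma pdPhi_zero_of_nmem (f : P2 → ℝ) {p : P2} (hp : p ∉ tsupport f) : pdPhi f p = 0 := by
  have hopen : IsOpen (tsupport f)ᶜ := (isClosed_tsupport f).isOpen_compl
  have hev : ∀ᶠ q in nhds p, f q = 0 := by
    filter_upwards [hopen.mem_nhds hp] with q hq using image_eq_zero_of_notMem_tsupport hq
  have hcont : Filter.Tendsto (fun s : ℝ => ((p.1, s) : P2)) (nhds p.2) (nhds p) := by
    have : Continuous fun s : ℝ => ((p.1, s) : P2) := by continuity
    exact this.continuousAt (x := p.2)
  have hev2 : (fun s : ℝ => f (p.1, s)) =ᶠ[nhds p.2] (fun _ => (0 : ℝ)) :=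
    hcont.eventually hev
  rw [pdPhi, hev2.deriv_eq, deriv_const]

/-- **Strict positivity of the relative entropy up to second order**: for smooth,
compactly supported, not identically vanishing f supported in {V > 0},
2π·∫ V·( (∂_V f)² + θ²(∂_V∂_φ f)² ) dV dφ > 0. -/
theorem second_order_entropy_positive (θ : ℝ) (f : P2 → ℝ)
    (hf : ContDiff ℝ (⊤ : ℕ∞) f) (hfc : HasCompactSupport f)
    (hsupp : tsupport f ⊆ {p : P2 | 0 < p.1}) (hne : f ≠ 0) :
    0 < 2 * π * ∫ p, p.1 * ((pdV f p) ^ 2 + θ ^ 2 * (pdV (pdPhi f) p) ^ 2)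
        ∂(volume : Measure P2) := by
  have hfd : Differentiable ℝ f := hf.differentiable (by simp)
  -- pdPhi f is smooth
  have hpdPhi_eq : pdPhi f = fun p => fderiv ℝ f p ((0 : ℝ), (1 : ℝ)) :=
    funext fun p => pdPhi_eq_fderiv f hfd p
  have hpdPhi_smooth : ContDiff ℝ (⊤ : ℕ∞) (pdPhi f) := by
    rw [hpdPhi_eq]
    exact (hf.fderiv_right (by simp)).clm_apply contDiff_const
  have hpdPhi_d : Differentiable ℝ (pdPhi f) := hpdPhi_smooth.differentiable (by simp)
  -- continuity of pdV f and pdV (pdPhi f)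
  have hpdV_eq : pdV f = fun p => fderiv ℝ f p ((1 : ℝ), (0 : ℝ)) :=
    funext fun p => pdV_eq_fderiv f hfd p
  have hc1 : Continuous (pdV f) := by
    rw [hpdV_eq]
    exact ((hf.fderiv_right (m := (⊤ : ℕ∞)) (by simp)).clm_apply contDiff_const).continuous
  have hc2 : Continuous (pdV (pdPhi f)) := by
    have : pdV (pdPhi f) = fun p => fderiv ℝ (pdPhi f) p ((1 : ℝ), (0 : ℝ)) :=
      funext fun p => pdV_eq_fderiv (pdPhi f) hpdPhi_d p
    rw [this]
    exact ((hpdPhi_smooth.fderiv_right (m := (⊤ : ℕ∞)) (by simp)).clm_apply contDiff_const).continuous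
  -- tsupport of pdPhi f inside tsupport f
  have htsPhi : tsupport (pdPhi f) ⊆ tsupport f := by
    apply closure_minimal _ (isClosed_tsupport f)
    intro p hp
    by_contra hpn
    exact hp (pdPhi_zero_of_nmem f hpn)
  have hpdVPhi_zero : ∀ p : P2, p ∉ tsupport f → pdV (pdPhi f) p = 0 := by
    intro p hp
    exact pdV_zero_of_nmem (pdPhi f) (fun h => hp (htsPhi h))
  set g : P2 → ℝ :=
    fun p => p.1 * ((pdV f p) ^ 2 + θ ^ 2 * (pdV (pdPhi f) p) ^ 2) with hg
  have hgc : Continuous g := by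
    apply continuous_fst.mul
    exact ((hc1.pow 2).add (continuous_const.mul (hc2.pow 2)))
  have hgzero : ∀ p : P2, p ∉ tsupport f → g p = 0 := by
    intro p hp
    simp [hg, pdV_zero_of_nmem f hp, hpdVPhi_zero p hp]
  have hgnn : ∀ p, 0 ≤ g p := by
    intro p
    by_cases hp : p ∈ tsupport f
    · have h1 : 0 < p.1 := hsupp hp
      have : (0:ℝ) ≤ (pdV f p) ^ 2 + θ ^ 2 * (pdV (pdPhi f) p) ^ 2 := by positivity
      exact mul_nonneg h1.le this
    · simp [hgzero p hp]
  have hgsupp : HasCompactSupport g := by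
    apply HasCompactSupport.of_support_subset_isCompact hfc
    intro p hp
    by_contra hpn
    exact hp (hgzero p hpn)
  have hgi : Integrable g (volume : Measure P2) :=
    hgc.integrable_of_hasCompactSupport hgsupp
  -- find a point where pdV f is nonzero
  have hex : ∃ p : P2, pdV f p ≠ 0 := by
    by_contra hall
    push_neg at hall
    obtain ⟨q, hq⟩ : ∃ q : P2, f q ≠ 0 := by
      by_contra h
      push_neg at h
      exact hne (funext h)
    have hdiff : Differentiable ℝ (fun v : ℝ => f (v, q.2)) := by
      intro v
      have h1 : Differentiable ℝ (fun v : ℝ => ((v, q.2) : P2)) :=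
        (differentiable_id).prodMk (differentiable_const _)
      exact (hfd.comp h1) v
    have hconst : f (q.1, q.2) = f (0, q.2) :=
      is_const_of_deriv_eq_zero hdiff (fun v => hall (v, q.2)) q.1 0
    have h0 : f (0, q.2) = 0 := by
      apply image_eq_zero_of_notMem_tsupport
      intro hmem
      exact lt_irrefl (0:ℝ) (hsupp hmem)
    rw [h0] at hconst
    exact hq hconst
  obtain ⟨p0, hp0⟩ := hex
  have hp0mem : p0 ∈ tsupport f := by
    by_contra h
    exact hp0 (pdV_zero_of_nmem f h)
  have hp0pos : 0 < p0.1 := hsupp hp0mem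
  have hgp0 : 0 < g p0 := by
    have : (0:ℝ) < (pdV f p0) ^ 2 + θ ^ 2 * (pdV (pdPhi f) p0) ^ 2 := by positivity
    exact mul_pos hp0pos this
  have hpos : 0 < ∫ p, g p ∂(volume : Measure P2) := by
    rw [integral_pos_iff_support_of_nonneg hgnn hgi]
    have hopen : IsOpen (Function.support g) := hgc.isOpen_support
    exact hopen.measure_pos volume ⟨p0, ne_of_gt hgp0⟩
  have h2pi : (0:ℝ) < 2 * π := by positivity
  exact mul_pos h2pi hpos

end
end

section
/- For every smooth compactly supported f : ℝ² → ℝ (coordinates (V,φ)), − ∫_{ℝ²} V³·(∂_V³ f)·(∂_V ∂_φ² f) dV dφ = ∫_{ℝ²} ( 3·V·(∂_V ∂_φ f)² − V³·(∂_V² ∂_φ f)² ) dV dφ. -/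
open MeasureTheory Real

noncomputable section

lemma hasDerivAt_sliceV {g : P2 → ℝ} (hg : ContDiff ℝ (⊤ : ℕ∞) g) (p : P2) :
    HasDerivAt (fun v : ℝ => g (v, p.2)) (pdV g p) p.1 := by
  have h1 : DifferentiableAt ℝ (fun v : ℝ => g (v, p.2)) p.1 :=
    (hg.differentiable (by simp) (p.1, p.2)).comp p.1
      ((differentiable_id.prodMk (differentiable_const p.2)) p.1)
  exact h1.hasDerivAt

lemma hasDerivAt_slicePhi {g : P2 → ℝ} (hg : ContDiff ℝ (⊤ : ℕ∞) g) (p : P2) :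
    HasDerivAt (fun s : ℝ => g (p.1, s)) (pdPhi g p) p.2 := by
  have h1 : DifferentiableAt ℝ (fun s : ℝ => g (p.1, s)) p.2 :=
    (hg.differentiable (by simp) (p.1, p.2)).comp p.2
      ((differentiable_const p.1).prodMk differentiable_id p.2)
  exact h1.hasDerivAt

lemma pdV_eq_fderiv_s19 {g : P2 → ℝ} (hg : ContDiff ℝ (⊤ : ℕ∞) g) (p : P2) :
    pdV g p = fderiv ℝ g p (1, 0) := by
  have h := ((hg.differentiable (by simp) (p.1, p.2)).hasFDerivAt.comp_hasDerivAt p.1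
    ((hasDerivAt_id p.1).prodMk (hasDerivAt_const p.1 p.2)))
  simpa [pdV, Function.comp_def] using h.deriv

lemma pdPhi_eq_fderiv_s19 {g : P2 → ℝ} (hg : ContDiff ℝ (⊤ : ℕ∞) g) (p : P2) :
    pdPhi g p = fderiv ℝ g p (0, 1) := by
  have h := ((hg.differentiable (by simp) (p.1, p.2)).hasFDerivAt.comp_hasDerivAt p.2
    ((hasDerivAt_const p.2 p.1).prodMk (hasDerivAt_id p.2)))
  simpa [pdPhi, Function.comp_def] using h.deriv

lemma contDiff_pdV {g : P2 → ℝ} (hg : ContDiff ℝ (⊤ : ℕ∞) g) : ContDiff ℝ (⊤ : ℕ∞) (pdV g) := by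
  have h : pdV g = fun p => fderiv ℝ g p (1, 0) := funext fun p => pdV_eq_fderiv_s19 hg p
  rw [h]; exact (hg.fderiv_right (by simp)).clm_apply contDiff_const

lemma contDiff_pdPhi {g : P2 → ℝ} (hg : ContDiff ℝ (⊤ : ℕ∞) g) : ContDiff ℝ (⊤ : ℕ∞) (pdPhi g) := by
  have h : pdPhi g = fun p => fderiv ℝ g p (0, 1) := funext fun p => pdPhi_eq_fderiv_s19 hg p
  rw [h]; exact (hg.fderiv_right (by simp)).clm_apply contDiff_const

lemma hcs_pdV {g : P2 → ℝ} (hgc : HasCompactSupport g) : HasCompactSupport (pdV g) := by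
  apply HasCompactSupport.intro hgc
  intro p hp
  have hopen : IsOpen (tsupport g)ᶜ := (isClosed_tsupport g).isOpen_compl
  have hev : ∀ᶠ v in nhds p.1, (fun v : ℝ => g (v, p.2)) v = (fun _ : ℝ => (0:ℝ)) v := by
    have hc : Continuous (fun v : ℝ => (v, p.2)) := continuous_id.prodMk continuous_const
    filter_upwards [hc.continuousAt.preimage_mem_nhds (hopen.mem_nhds hp)] with v hv
    exact image_eq_zero_of_notMem_tsupport hv
  simpa [pdV] using (Filter.EventuallyEq.deriv_eq hev).trans (deriv_const _ _)

lemma hcs_pdPhi {g : P2 → ℝ} (hgc : HasCompactSupport g) : HasCompactSupport (pdPhi g) := by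
  apply HasCompactSupport.intro hgc
  intro p hp
  have hopen : IsOpen (tsupport g)ᶜ := (isClosed_tsupport g).isOpen_compl
  have hev : ∀ᶠ s in nhds p.2, (fun s : ℝ => g (p.1, s)) s = (fun _ : ℝ => (0:ℝ)) s := by
    have hc : Continuous (fun s : ℝ => (p.1, s)) := continuous_const.prodMk continuous_id
    filter_upwards [hc.continuousAt.preimage_mem_nhds (hopen.mem_nhds hp)] with s hs
    exact image_eq_zero_of_notMem_tsupport hs
  simpa [pdPhi] using (Filter.EventuallyEq.deriv_eq hev).trans (deriv_const _ _)

lemma pd_swap {g : P2 → ℝ} (hg : ContDiff ℝ (⊤ : ℕ∞) g) : pdV (pdPhi g) = pdPhi (pdV g) := by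
  funext p
  have hdf : Differentiable ℝ (fderiv ℝ g) := (hg.fderiv_right (m := 1) (by exact WithTop.coe_le_coe.mpr (le_top : ((1+1:ℕ):ℕ∞) ≤ ⊤))).differentiable one_ne_zero
  have h1 : pdV (pdPhi g) p = fderiv ℝ (fderiv ℝ g) p (1,0) (0,1) := by
    rw [pdV_eq_fderiv_s19 (contDiff_pdPhi hg) p]
    have : pdPhi g = fun q => fderiv ℝ g q (0, 1) := funext fun q => pdPhi_eq_fderiv_s19 hg q
    rw [this, fderiv_clm_apply (hdf p) (differentiableAt_const _)]
    simp
  have h2 : pdPhi (pdV g) p = fderiv ℝ (fderiv ℝ g) p (0,1) (1,0) := by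
    rw [pdPhi_eq_fderiv_s19 (contDiff_pdV hg) p]
    have : pdV g = fun q => fderiv ℝ g q (1, 0) := funext fun q => pdV_eq_fderiv_s19 hg q
    rw [this, fderiv_clm_apply (hdf p) (differentiableAt_const _)]
    simp
  rw [h1, h2]
  exact second_derivative_symmetric
    (fun y => (hg.differentiable (by simp) y).hasFDerivAt) (hdf p).hasFDerivAt _ _

lemma hcs_sliceV {g : P2 → ℝ} (hgc : HasCompactSupport g) (y : ℝ) :
    HasCompactSupport (fun v : ℝ => g (v, y)) := by
  apply HasCompactSupport.intro (hgc.image continuous_fst)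
  intro v hv
  apply image_eq_zero_of_notMem_tsupport
  exact fun h => hv ⟨(v, y), h, rfl⟩

lemma hcs_slicePhi {g : P2 → ℝ} (hgc : HasCompactSupport g) (x : ℝ) :
    HasCompactSupport (fun s : ℝ => g (x, s)) := by
  apply HasCompactSupport.intro (hgc.image continuous_snd)
  intro s hs
  apply image_eq_zero_of_notMem_tsupport
  exact fun h => hs ⟨(x, s), h, rfl⟩

lemma integrable_sliceV {g : P2 → ℝ} (hg : Continuous g) (hgc : HasCompactSupport g) (y : ℝ) :
    Integrable (fun v : ℝ => g (v, y)) volume :=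
  (hg.comp (continuous_id.prodMk continuous_const)).integrable_of_hasCompactSupport
    (hcs_sliceV hgc y)

lemma integrable_slicePhi {g : P2 → ℝ} (hg : Continuous g) (hgc : HasCompactSupport g) (x : ℝ) :
    Integrable (fun s : ℝ => g (x, s)) volume :=
  (hg.comp (continuous_const.prodMk continuous_id)).integrable_of_hasCompactSupport
    (hcs_slicePhi hgc x)

lemma integral_pdV_eq_zero {g : P2 → ℝ} (hg : ContDiff ℝ (⊤ : ℕ∞) g) (hgc : HasCompactSupport g) :
    ∫ p, pdV g p ∂(volume : Measure P2) = 0 := by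
  have hcont : Continuous (pdV g) := (contDiff_pdV hg).continuous
  have hint : Integrable (pdV g) (volume : Measure P2) :=
    hcont.integrable_of_hasCompactSupport (hcs_pdV hgc)
  rw [Measure.volume_eq_prod ℝ ℝ] at hint ⊢
  rw [integral_prod_symm _ hint]
  have : ∀ y : ℝ, ∫ x : ℝ, pdV g (x, y) = 0 := by
    intro y
    apply integral_eq_zero_of_hasDerivAt_of_integrable
      (f := fun v : ℝ => g (v, y))
    · intro x
      exact hasDerivAt_sliceV hg (x, y)
    · exact integrable_sliceV hcont (hcs_pdV hgc) y
    · exact integrable_sliceV hg.continuous hgc y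
  simp [this]

lemma integral_pdPhi_eq_zero {g : P2 → ℝ} (hg : ContDiff ℝ (⊤ : ℕ∞) g) (hgc : HasCompactSupport g) :
    ∫ p, pdPhi g p ∂(volume : Measure P2) = 0 := by
  have hcont : Continuous (pdPhi g) := (contDiff_pdPhi hg).continuous
  have hint : Integrable (pdPhi g) (volume : Measure P2) :=
    hcont.integrable_of_hasCompactSupport (hcs_pdPhi hgc)
  rw [Measure.volume_eq_prod ℝ ℝ] at hint ⊢
  rw [integral_prod _ hint]
  have : ∀ x : ℝ, ∫ y : ℝ, pdPhi g (x, y) = 0 := by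
    intro x
    apply integral_eq_zero_of_hasDerivAt_of_integrable
      (f := fun s : ℝ => g (x, s))
    · intro y
      exact hasDerivAt_slicePhi hg (x, y)
    · exact integrable_slicePhi hcont (hcs_pdPhi hgc) x
    · exact integrable_slicePhi hg.continuous hgc x
  simp [this]

/-- **Integration-by-parts identity** used in the second-order relative entropy:
− ∫ V³(∂_V³f)(∂_V∂_φ²f) dV dφ = ∫ ( 3V(∂_V∂_φ f)² − V³(∂_V²∂_φ f)² ) dV dφ. -/
theorem ibp_identity_three (f : P2 → ℝ)
    (hf : ContDiff ℝ (⊤ : ℕ∞) f) (hfc : HasCompactSupport f) :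
    - ∫ p, p.1 ^ 3 * pdV (pdV (pdV f)) p * pdV (pdPhi (pdPhi f)) p ∂(volume : Measure P2) =
      ∫ p, (3 * p.1 * (pdV (pdPhi f) p) ^ 2 - p.1 ^ 3 * (pdV (pdV (pdPhi f)) p) ^ 2)
        ∂(volume : Measure P2) := by
  -- abbreviations: a = f_{Vφ}, b = f_{VVφ}, c = f_{VVV}, d = f_{Vφφ}
  have hda : ContDiff ℝ (⊤ : ℕ∞) (pdV (pdPhi f)) := contDiff_pdV (contDiff_pdPhi hf)
  have hdb : ContDiff ℝ (⊤ : ℕ∞) (pdV (pdV (pdPhi f))) := contDiff_pdV hda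
  have hdc : ContDiff ℝ (⊤ : ℕ∞) (pdV (pdV (pdV f))) :=
    contDiff_pdV (contDiff_pdV (contDiff_pdV hf))
  have hdd : ContDiff ℝ (⊤ : ℕ∞) (pdV (pdPhi (pdPhi f))) :=
    contDiff_pdV (contDiff_pdPhi (contDiff_pdPhi hf))
  have hca : HasCompactSupport (pdV (pdPhi f)) := hcs_pdV (hcs_pdPhi hfc)
  have hcb : HasCompactSupport (pdV (pdV (pdPhi f))) := hcs_pdV hca
  have hcd : HasCompactSupport (pdV (pdPhi (pdPhi f))) :=
    hcs_pdV (hcs_pdPhi (hcs_pdPhi hfc))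
  -- Clairaut swaps
  have hswapA : pdPhi (pdV (pdPhi f)) = pdV (pdPhi (pdPhi f)) :=
    (pd_swap (contDiff_pdPhi hf)).symm
  have hswapC : pdPhi (pdV (pdV (pdV f))) = pdV (pdV (pdV (pdPhi f))) := by
    calc pdPhi (pdV (pdV (pdV f))) = pdV (pdPhi (pdV (pdV f))) :=
          (pd_swap (contDiff_pdV (contDiff_pdV hf))).symm
      _ = pdV (pdV (pdPhi (pdV f))) := congrArg pdV (pd_swap (contDiff_pdV hf)).symm
      _ = pdV (pdV (pdV (pdPhi f))) := congrArg pdV (congrArg pdV (pd_swap hf).symm)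
  -- the two "divergence" terms
  -- E q = q₁³ · f_{VVV} q · f_{Vφ} q
  -- F q = (3/2) q₁² (f_{Vφ} q)² − q₁³ · f_{VVφ} q · f_{Vφ} q
  have hEp : ∀ p : P2,
      pdPhi (fun q : P2 => q.1 ^ 3 * pdV (pdV (pdV f)) q * pdV (pdPhi f) q) p
        = p.1 ^ 3 * pdV (pdV (pdV (pdPhi f))) p * pdV (pdPhi f) p
          + p.1 ^ 3 * pdV (pdV (pdV f)) p * pdV (pdPhi (pdPhi f)) p := by
    intro p
    have hc' := hasDerivAt_slicePhi hdc p
    have ha' := hasDerivAt_slicePhi hda p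
    have h := ((hasDerivAt_const p.2 (p.1 ^ 3)).mul hc').mul ha'
    have hd := h.deriv
    have hgoal : pdPhi (fun q : P2 => q.1 ^ 3 * pdV (pdV (pdV f)) q * pdV (pdPhi f) q) p
        = (0 * pdV (pdV (pdV f)) p + p.1 ^ 3 * pdPhi (pdV (pdV (pdV f))) p)
            * pdV (pdPhi f) p
          + p.1 ^ 3 * pdV (pdV (pdV f)) p * pdPhi (pdV (pdPhi f)) p := hd
    rw [hgoal, hswapC, hswapA]
    ring
  have hFp : ∀ p : P2,
      pdV (fun q : P2 => 3 / 2 * q.1 ^ 2 * pdV (pdPhi f) q ^ 2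
          - q.1 ^ 3 * pdV (pdV (pdPhi f)) q * pdV (pdPhi f) q) p
        = 3 * p.1 * pdV (pdPhi f) p ^ 2
          - p.1 ^ 3 * pdV (pdV (pdV (pdPhi f))) p * pdV (pdPhi f) p
          - p.1 ^ 3 * pdV (pdV (pdPhi f)) p ^ 2 := by
    intro p
    have ha' := hasDerivAt_sliceV hda p
    have hb' := hasDerivAt_sliceV hdb p
    have h1 := ((hasDerivAt_const p.1 ((3:ℝ) / 2)).mul (hasDerivAt_pow 2 p.1)).mul (ha'.pow 2)
    have h2 := ((hasDerivAt_pow 3 p.1).mul hb').mul ha'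
    have h := (h1.sub h2).deriv
    have hgoal : pdV (fun q : P2 => 3 / 2 * q.1 ^ 2 * pdV (pdPhi f) q ^ 2
          - q.1 ^ 3 * pdV (pdV (pdPhi f)) q * pdV (pdPhi f) q) p
        = ((0 * p.1 ^ 2 + 3 / 2 * (↑2 * p.1 ^ 1)) * pdV (pdPhi f) p ^ 2
            + 3 / 2 * p.1 ^ 2 * (↑2 * pdV (pdPhi f) p ^ 1 * pdV (pdV (pdPhi f)) p))
          - ((↑3 * p.1 ^ 2 * pdV (pdV (pdPhi f)) p
              + p.1 ^ 3 * pdV (pdV (pdV (pdPhi f))) p) * pdV (pdPhi f) p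
            + p.1 ^ 3 * pdV (pdV (pdPhi f)) p * pdV (pdV (pdPhi f)) p) := h
    rw [hgoal]
    ring
  -- smoothness and compact support of E and F
  have hEcd : ContDiff ℝ (⊤ : ℕ∞) (fun q : P2 => q.1 ^ 3 * pdV (pdV (pdV f)) q * pdV (pdPhi f) q) :=
    ((contDiff_fst.pow 3).mul hdc).mul hda
  have hFcd : ContDiff ℝ (⊤ : ℕ∞) (fun q : P2 => 3 / 2 * q.1 ^ 2 * pdV (pdPhi f) q ^ 2
      - q.1 ^ 3 * pdV (pdV (pdPhi f)) q * pdV (pdPhi f) q) :=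
    ((contDiff_const.mul (contDiff_fst.pow 2)).mul (hda.pow 2)).sub
      (((contDiff_fst.pow 3).mul hdb).mul hda)
  have hEcs : HasCompactSupport (fun q : P2 => q.1 ^ 3 * pdV (pdV (pdV f)) q * pdV (pdPhi f) q) := by
    apply HasCompactSupport.intro hca
    intro q hq
    simp [image_eq_zero_of_notMem_tsupport hq]
  have hFcs : HasCompactSupport (fun q : P2 => 3 / 2 * q.1 ^ 2 * pdV (pdPhi f) q ^ 2
      - q.1 ^ 3 * pdV (pdV (pdPhi f)) q * pdV (pdPhi f) q) := by
    apply HasCompactSupport.intro hca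
    intro q hq
    simp [image_eq_zero_of_notMem_tsupport hq]
  -- integrability of the two target integrands
  have hI1 : Integrable (fun p : P2 =>
      p.1 ^ 3 * pdV (pdV (pdV f)) p * pdV (pdPhi (pdPhi f)) p) (volume : Measure P2) := by
    apply Continuous.integrable_of_hasCompactSupport
    · exact (((contDiff_fst.pow 3).mul hdc).mul hdd).continuous
    · apply HasCompactSupport.intro hcd
      intro q hq
      simp [image_eq_zero_of_notMem_tsupport hq]
  have hI2a : Integrable (fun p : P2 => 3 * p.1 * pdV (pdPhi f) p ^ 2) (volume : Measure P2) := by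
    apply Continuous.integrable_of_hasCompactSupport
    · exact ((contDiff_const.mul contDiff_fst).mul (hda.pow 2)).continuous
    · apply HasCompactSupport.intro hca
      intro q hq
      simp [image_eq_zero_of_notMem_tsupport hq]
  have hI2b : Integrable (fun p : P2 => p.1 ^ 3 * pdV (pdV (pdPhi f)) p ^ 2)
      (volume : Measure P2) := by
    apply Continuous.integrable_of_hasCompactSupport
    · exact ((contDiff_fst.pow 3).mul (hdb.pow 2)).continuous
    · apply HasCompactSupport.intro hcb
      intro q hq
      simp [image_eq_zero_of_notMem_tsupport hq]
  -- the divergence integrates to zero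
  have h0 : (∫ p, (pdPhi (fun q : P2 => q.1 ^ 3 * pdV (pdV (pdV f)) q * pdV (pdPhi f) q) p
      + pdV (fun q : P2 => 3 / 2 * q.1 ^ 2 * pdV (pdPhi f) q ^ 2
          - q.1 ^ 3 * pdV (pdV (pdPhi f)) q * pdV (pdPhi f) q) p) ∂(volume : Measure P2)) = 0 := by
    rw [integral_add
      (((contDiff_pdPhi hEcd).continuous).integrable_of_hasCompactSupport (hcs_pdPhi hEcs))
      (((contDiff_pdV hFcd).continuous).integrable_of_hasCompactSupport (hcs_pdV hFcs)),
      integral_pdPhi_eq_zero hEcd hEcs, integral_pdV_eq_zero hFcd hFcs]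
    ring
  have hfun : (fun p : P2 => pdPhi (fun q : P2 => q.1 ^ 3 * pdV (pdV (pdV f)) q * pdV (pdPhi f) q) p
      + pdV (fun q : P2 => 3 / 2 * q.1 ^ 2 * pdV (pdPhi f) q ^ 2
          - q.1 ^ 3 * pdV (pdV (pdPhi f)) q * pdV (pdPhi f) q) p)
      = fun p : P2 => p.1 ^ 3 * pdV (pdV (pdV f)) p * pdV (pdPhi (pdPhi f)) p
        + (3 * p.1 * pdV (pdPhi f) p ^ 2 - p.1 ^ 3 * pdV (pdV (pdPhi f)) p ^ 2) := by
    funext p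
    rw [hEp p, hFp p]
    ring
  have hI2 : Integrable (fun p : P2 =>
      3 * p.1 * pdV (pdPhi f) p ^ 2 - p.1 ^ 3 * pdV (pdV (pdPhi f)) p ^ 2)
      (volume : Measure P2) := hI2a.sub hI2b
  rw [hfun, integral_add hI1 hI2] at h0
  linarith

end
end
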